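/- The standard 4-point IB kernel φ satisfies the sum-of-squares identity: for every real ε, ∑_{j ∈ ℤ} φ(j + ε)² = 3/8. -/
import Mathlib


noncomputable def phi (r : ℝ) : ℝ :=
  if |r| ≤ 1 then (3 - 2*|r| + Real.sqrt (1 + 4*|r| - 4*r^2))/8
  else if |r| ≤ 2 then (5 - 2*|r| - Real.sqrt (-7 + 12*|r| - 4*r^2))/8
  else 0

lemma phi_zero_of (r : ℝ) (h : 2 ≤ |r|) : phi r = 0 := by
  unfold phi
  rw [if_neg (by linarith)]
  by_cases h2 : |r| ≤ 2
  · have habs : |r| = 2 := le_antisymm h2 h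
    have hr2 : r ^ 2 = 4 := by rw [← sq_abs, habs]; norm_num
    rw [if_pos h2, habs, hr2]
    norm_num
  · rw [if_neg h2]

lemma phi_main (ε : ℝ) (hε0 : 0 ≤ ε) (hε1 : ε < 1) :
    ∑' j : ℤ, (phi (j + ε))^2 = 3/8 := by
  set s : ℝ := Real.sqrt (1 + 4*ε - 4*ε^2) with hs
  have harg : (0:ℝ) ≤ 1 + 4*ε - 4*ε^2 := by nlinarith
  have hs2 : s^2 = 1 + 4*ε - 4*ε^2 := Real.sq_sqrt harg
  have hsnn : 0 ≤ s := Real.sqrt_nonneg _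
  have h0 : phi ε = (3 - 2*ε + s)/8 := by
    unfold phi
    rw [abs_of_nonneg hε0, if_pos hε1.le]
  have h1 : phi (-1 + ε) = (1 + 2*ε + s)/8 := by
    unfold phi
    rw [abs_of_nonpos (by linarith), if_pos (by linarith)]
    rw [show 1 + 4*(-(-1+ε)) - 4*(-1+ε)^2 = 1 + 4*ε - 4*ε^2 by ring]
    ring
  have h2 : phi (1 + ε) = (3 - 2*ε - s)/8 := by
    rcases eq_or_lt_of_le hε0 with h | h
    · unfold phi
      have hs1 : s = 1 := by rw [hs, ← h]; norm_num
      rw [← h, hs1]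
      norm_num [phi]
    · unfold phi
      rw [abs_of_nonneg (by linarith), if_neg (by linarith), if_pos (by linarith)]
      rw [show -7 + 12*(1+ε) - 4*(1+ε)^2 = 1 + 4*ε - 4*ε^2 by ring]
      ring
  have h3 : phi (-2 + ε) = (1 + 2*ε - s)/8 := by
    unfold phi
    rw [abs_of_nonpos (by linarith), if_neg (by linarith), if_pos (by linarith)]
    rw [show -7 + 12*(-(-2+ε)) - 4*(-2+ε)^2 = 1 + 4*ε - 4*ε^2 by ring]
    ring
  have hzero : ∀ j : ℤ, j ∉ ({-2, -1, 0, 1} : Finset ℤ) → (phi (j + ε))^2 = 0 := by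
    intro j hj
    simp only [Finset.mem_insert, Finset.mem_singleton] at hj
    push_neg at hj
    have : j ≤ -3 ∨ 2 ≤ j := by omega
    have hz : phi ((j:ℝ) + ε) = 0 := by
      apply phi_zero_of
      rcases this with h | h
      · have : (j:ℝ) ≤ -3 := by exact_mod_cast h
        rw [abs_of_nonpos (by linarith)]; linarith
      · have : (2:ℝ) ≤ (j:ℝ) := by exact_mod_cast h
        rw [abs_of_nonneg (by linarith)]; linarith
    rw [hz]; ring
  rw [tsum_eq_sum hzero]
  have e : ∑ b ∈ ({-2, -1, 0, 1} : Finset ℤ), phi ((b:ℝ) + ε) ^ 2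
      = phi (-2 + ε)^2 + phi (-1 + ε)^2 + phi ((0:ℝ) + ε)^2 + phi (1 + ε)^2 := by
    rw [Finset.sum_insert (by decide), Finset.sum_insert (by decide),
        Finset.sum_insert (by decide), Finset.sum_singleton]
    push_cast
    ring
  rw [e, zero_add, h0, h1, h2, h3]
  nlinarith [hs2]

theorem phi_sum_of_squares (ε : ℝ) : ∑' j : ℤ, (phi (j + ε))^2 = 3/8 := by
  have key : ∀ j : ℤ, phi (j + ε) = phi ((j + ⌊ε⌋ : ℤ) + Int.fract ε) := by
    intro j
    congr 1
    push_cast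
    rw [Int.fract]
    ring
  calc ∑' j : ℤ, (phi (j + ε))^2
      = ∑' j : ℤ, (phi ((j + ⌊ε⌋ : ℤ) + Int.fract ε))^2 := by
        exact tsum_congr fun j => by rw [key j]
    _ = ∑' j : ℤ, (phi (j + Int.fract ε))^2 :=
        (Equiv.addRight (⌊ε⌋ : ℤ)).tsum_eq (fun j : ℤ => (phi (j + Int.fract ε))^2)
    _ = 3/8 := phi_main _ (Int.fract_nonneg ε) (Int.fract_lt_one ε)
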